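/- Let f : [0,1]^d → ℝ satisfy the mixed α-Hölder condition: the iterated difference δ_{x_d}⋯δ_{x_1} f is bounded by C ∏_i |x_i' − x_i|^α. Let Q^{j_i} denote the dyadic martingale difference operator at scale j_i in direction i. Then ‖Q^{j_d} Q^{j_{d-1}} ⋯ Q^{j_1} f‖_{L^∞([0,1]^d)} ≤ C'·2^{-(j_1 + j_2 + ⋯ + j_d)α}, with C' depending only on C and d. -/

import Mathlib

open MeasureTheory

variable {d : ℕ}

/-- Dyadic averaging at scale `j` in direction `i` for `f : (Fin d → ℝ) → ℝ`. -/
noncomputable def avgDir (i : Fin d) (j : ℕ) (f : (Fin d → ℝ) → ℝ)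
    (x : Fin d → ℝ) : ℝ :=
  (2:ℝ)^j * ∫ s in Set.Ioc (((⌈(2:ℝ)^j * x i⌉ : ℝ) - 1) / (2:ℝ)^j)
      ((⌈(2:ℝ)^j * x i⌉ : ℝ) / (2:ℝ)^j), f (Function.update x i s)

/-- Martingale difference at scale `j` in direction `i`. -/
noncomputable def diffDir (i : Fin d) (j : ℕ) (f : (Fin d → ℝ) → ℝ)
    (x : Fin d → ℝ) : ℝ :=
  avgDir i (j+1) f x - avgDir i j f x

/-!
Write `Q^j_k g = ⨍_{I'} g - ⨍_I g`, where `I' ⊆ I` are the dyadic cells of sizes `2^{-j-1}` and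
`2^{-j}` containing `x_k`. A mixed difference of `Q^j_k g` in the other directions is then a
double average over `s ∈ I'`, `t ∈ I` of mixed differences of `g` that also involve direction `k`,
with increment `s - t` there, and `|s - t| ≤ 2^{-j}`. So each `Q^{j_k}` trades the factor
`|y_k - x_k|^α` of the mixed Hölder bound for `2^{-j_k α}`; once all directions are used up, the
mixed difference over no direction is the value of the function itself.
-/
open Set Function

noncomputable def dyadicCell (m : ℕ) (r : ℝ) : Set ℝ :=
  Ioc (((⌈(2:ℝ)^m * r⌉ : ℝ) - 1) / (2:ℝ)^m) ((⌈(2:ℝ)^m * r⌉ : ℝ) / (2:ℝ)^m)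

theorem mem_dyadicCell {m : ℕ} {r s : ℝ} :
    s ∈ dyadicCell m r ↔ ⌈(2:ℝ)^m * s⌉ = ⌈(2:ℝ)^m * r⌉ := by
  have h2 : (0:ℝ) < 2^m := by positivity
  rw [dyadicCell, mem_Ioc, div_lt_iff₀ h2, le_div_iff₀ h2, Int.ceil_eq_iff, mul_comm s]

theorem dyadicCell_succ_subset (m : ℕ) (r : ℝ) : dyadicCell (m+1) r ⊆ dyadicCell m r := by
  -- `⌈a / 2⌉` depends only on `⌈a⌉`.
  have key : ∀ a : ℝ, ⌈(2:ℝ)^m * a⌉ = -(-⌈(2:ℝ)^(m+1) * a⌉ / 2) := by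
    intro a
    have h : (2:ℝ)^m * a = -(-((2:ℝ)^(m+1) * a) / ((2:ℕ):ℝ)) := by push_cast; ring
    rw [h, Int.ceil_neg, Int.floor_div_natCast, Int.floor_neg, Nat.cast_ofNat]
  intro s hs
  rw [mem_dyadicCell] at hs ⊢
  rw [key, key, hs]

theorem abs_sub_le_of_mem_dyadicCell {m : ℕ} {r s t : ℝ} (hs : s ∈ dyadicCell m r)
    (ht : t ∈ dyadicCell m r) : |s - t| ≤ ((2:ℝ)^m)⁻¹ := by
  have h2 : (0:ℝ) < 2^m := by positivity
  rw [mem_dyadicCell, Int.ceil_eq_iff] at hs ht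
  rw [inv_eq_one_div, le_div_iff₀' h2, ← abs_of_pos h2, ← abs_mul, mul_sub, abs_sub_le_iff]
  constructor <;> linarith

theorem dyadicCell_subset_Ioc {m : ℕ} {r : ℝ} (hr : r ∈ Ioc (0:ℝ) 1) :
    dyadicCell m r ⊆ Ioc 0 1 := by
  have h2 : (0:ℝ) < 2^m := by positivity
  have hpos : (1:ℝ) ≤ ⌈(2:ℝ)^m * r⌉ := by exact_mod_cast Int.ceil_pos.mpr (mul_pos h2 hr.1)
  have hle : (⌈(2:ℝ)^m * r⌉ : ℝ) ≤ 2^m := by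
    exact_mod_cast Int.ceil_le.mpr (by push_cast; nlinarith [hr.2])
  refine Ioc_subset_Ioc ?_ ?_
  · exact div_nonneg (by linarith) h2.le
  · rwa [div_le_one h2]

theorem volume_dyadicCell (m : ℕ) (r : ℝ) :
    volume (dyadicCell m r) = ENNReal.ofReal ((2:ℝ)^m)⁻¹ := by
  rw [dyadicCell, Real.volume_Ioc]
  congr 1
  field_simp
  ring

theorem avgDir_eq_setAverage (i : Fin d) (m : ℕ) (g : (Fin d → ℝ) → ℝ) (z : Fin d → ℝ) :
    avgDir i m g z = ⨍ s in dyadicCell m (z i), g (update z i s) := by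
  rw [setAverage_eq, measureReal_def, volume_dyadicCell, ENNReal.toReal_ofReal (by positivity),
    inv_inv, smul_eq_mul]
  rfl

section MixedDiff

variable {ι : Type*} [DecidableEq ι]

/-- The iterated difference `δ_{x_i}` over the directions `i ∈ A`, from `x` to `y`. -/
noncomputable def mixedDiff (A : Finset ι) (g : (ι → ℝ) → ℝ) (x y : ι → ℝ) : ℝ :=
  ∑ T ∈ A.powerset, (-1:ℝ)^(A.card - T.card) * g (T.piecewise y x)

theorem mixedDiff_empty (g : (ι → ℝ) → ℝ) (x y : ι → ℝ) : mixedDiff ∅ g x y = g x := by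
  simp [mixedDiff]

theorem mixedDiff_univ [Fintype ι] (g : (ι → ℝ) → ℝ) (x y : ι → ℝ) :
    mixedDiff Finset.univ g x y =
      ∑ S : Finset ι, (-1:ℝ)^(Fintype.card ι - S.card) * g (S.piecewise y x) := by
  rw [mixedDiff, Finset.powerset_univ, Finset.card_univ]

theorem mixedDiff_sub (A : Finset ι) (g₁ g₂ : (ι → ℝ) → ℝ) (x y : ι → ℝ) :
    mixedDiff A (fun z => g₁ z - g₂ z) x y = mixedDiff A g₁ x y - mixedDiff A g₂ x y := by
  simp only [mixedDiff, mul_sub, Finset.sum_sub_distrib]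

theorem mixedDiff_insert_update {B : Finset ι} {k : ι} (hk : k ∉ B) (g : (ι → ℝ) → ℝ)
    (x y : ι → ℝ) (s t : ℝ) :
    mixedDiff (insert k B) g (update x k t) (update y k s) =
      mixedDiff B g (update x k s) y - mixedDiff B g (update x k t) y := by
  rw [mixedDiff, Finset.sum_powerset_insert hk, mixedDiff, mixedDiff, ← Finset.sum_sub_distrib,
    add_comm, ← Finset.sum_add_distrib]
  refine Finset.sum_congr rfl fun T hT => ?_
  have hkT : k ∉ T := fun h => hk (Finset.mem_powerset.mp hT h)
  have hcard := Finset.card_le_card (Finset.mem_powerset.mp hT)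
  have hy : T.piecewise (update y k s) (update x k t) = T.piecewise y (update x k t) :=
    T.piecewise_congr (fun i hi => update_of_ne (ne_of_mem_of_not_mem hi hkT) _ _) fun _ _ => rfl
  rw [Finset.card_insert_of_notMem hk, Finset.card_insert_of_notMem hkT, Finset.piecewise_insert,
    hy, update_self, T.update_piecewise_of_notMem _ _ hkT, update_idem,
    show B.card + 1 - T.card = B.card - T.card + 1 by omega, Nat.add_sub_add_right, pow_succ]
  ring

theorem mixedDiff_update_of_notMem {B : Finset ι} {k : ι} (hk : k ∉ B) (g : (ι → ℝ) → ℝ)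
    (x y : ι → ℝ) (s : ℝ) :
    mixedDiff B g (update x k s) y =
      ∑ T ∈ B.powerset, (-1:ℝ)^(B.card - T.card) * g (update (T.piecewise y x) k s) :=
  Finset.sum_congr rfl fun T hT => by
    rw [T.update_piecewise_of_notMem _ _ fun h => hk (Finset.mem_powerset.mp hT h)]

end MixedDiff

theorem abs_setAverage_sub_setAverage_le {α : Type*} [MeasurableSpace α] {μ : Measure α}
    {I J : Set α} {ψ : α → ℝ} {B : ℝ} (hJI : J ⊆ I) (hJ : MeasurableSet J)
    (hI : MeasurableSet I) (hJ0 : μ J ≠ 0) (hIfin : μ I ≠ ⊤) (hψ : IntegrableOn ψ I μ)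
    (h : ∀ s ∈ J, ∀ t ∈ I, |ψ s - ψ t| ≤ B) :
    |⨍ s in J, ψ s ∂μ - ⨍ t in I, ψ t ∂μ| ≤ B := by
  set a := ⨍ t in I, ψ t ∂μ
  have hψJ : ∀ s ∈ J, ψ s ∈ Icc (a - B) (a + B) := by
    intro s hs
    have ha : a ∈ Icc (ψ s - B) (ψ s + B) :=
      (convex_Icc _ _).set_average_mem isClosed_Icc (fun h0 => hJ0 (measure_mono_null hJI h0))
        hIfin (ae_restrict_of_forall_mem hI fun t ht => by
          have := abs_sub_le_iff.mp (h s hs t ht)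
          constructor <;> linarith) hψ
    constructor <;> linarith [ha.1, ha.2]
  have hJa := (convex_Icc _ _).set_average_mem isClosed_Icc hJ0
    ((measure_mono hJI).trans_lt hIfin.lt_top).ne (ae_restrict_of_forall_mem hJ hψJ)
    (hψ.mono_set hJI)
  rw [abs_sub_le_iff]
  constructor <;> linarith [hJa.1, hJa.2]

theorem mixedDiff_avgDir {B : Finset (Fin d)} {k : Fin d} (hk : k ∉ B) (m : ℕ)
    {g : (Fin d → ℝ) → ℝ} {x y : Fin d → ℝ}
    (hg : ∀ z, IntegrableOn (fun s => g (update z k s)) (dyadicCell m (x k))) :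
    mixedDiff B (avgDir k m g) x y =
      ⨍ s in dyadicCell m (x k), mixedDiff B g (update x k s) y := by
  simp only [mixedDiff_update_of_notMem hk, setAverage_eq, smul_eq_mul]
  rw [integral_finsetSum _ fun T _ => (hg _).const_mul _, Finset.mul_sum, mixedDiff]
  refine Finset.sum_congr rfl fun T hT => ?_
  rw [avgDir_eq_setAverage, T.piecewise_eq_of_notMem _ _ fun h => hk (Finset.mem_powerset.mp hT h),
    setAverage_eq, smul_eq_mul, integral_const_mul]
  ring

section ContinuousAlong

variable {ι : Type*} [DecidableEq ι]

def ContinuousAlong (A : Finset ι) (g : (ι → ℝ) → ℝ) : Prop :=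
  ∀ z : ι → ℝ, Continuous fun w => g (A.piecewise w z)

theorem ContinuousAlong.continuous_update {A : Finset ι} {g : (ι → ℝ) → ℝ}
    (hg : ContinuousAlong A g) {k : ι} (hk : k ∈ A) (z : ι → ℝ) :
    Continuous fun s : ℝ => g (update z k s) := by
  have h : (fun s : ℝ => g (update z k s)) = (fun w => g (A.piecewise w z)) ∘ update z k := by
    funext s
    rw [comp_apply, ← A.update_piecewise_of_mem _ _ hk, A.piecewise_same]
  rw [h]
  exact (hg z).comp (continuous_const.update k continuous_id)

theorem ContinuousAlong.continuous_mixedDiff_update {A B : Finset ι} {g : (ι → ℝ) → ℝ}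
    (hg : ContinuousAlong A g) {k : ι} (hkA : k ∈ A) (hkB : k ∉ B) (x y : ι → ℝ) :
    Continuous fun s : ℝ => mixedDiff B g (update x k s) y := by
  simp only [mixedDiff_update_of_notMem hkB]
  exact continuous_finsetSum _ fun T _ => continuous_const.mul (hg.continuous_update hkA _)

theorem continuous_setIntegral_Ioc_update [Fintype ι] {G : (ι → ℝ) → ℝ} (hG : Continuous G)
    (k : ι) (a b : ℝ) : Continuous fun w => ∫ s in Ioc a b, G (update w k s) := by
  simp only [← integral_Icc_eq_integral_Ioc]
  exact continuous_parametric_integral_of_continuous (f := fun w s => G (update w k s))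
    (hG.comp (continuous_fst.update k continuous_snd)) isCompact_Icc

end ContinuousAlong

theorem ContinuousAlong.avgDir {A : Finset (Fin d)} {g : (Fin d → ℝ) → ℝ}
    (hg : ContinuousAlong A g) {k : Fin d} (hk : k ∈ A) (m : ℕ) :
    ContinuousAlong (A.erase k) (avgDir k m g) := by
  intro z
  have h : ∀ w s, update ((A.erase k).piecewise w z) k s = A.piecewise (update w k s) z := by
    intro w s
    ext i
    rcases eq_or_ne i k with rfl | hi
    · simp [hk]
    · by_cases hiA : i ∈ A <;> simp [Finset.piecewise, hi, hiA]
  simp only [_root_.avgDir, (A.erase k).piecewise_eq_of_notMem _ _ (A.notMem_erase k), h]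
  exact continuous_const.mul (continuous_setIntegral_Ioc_update (hg z) k _ _)

theorem ContinuousAlong.diffDir {A : Finset (Fin d)} {g : (Fin d → ℝ) → ℝ}
    (hg : ContinuousAlong A g) {k : Fin d} (hk : k ∈ A) (j : ℕ) :
    ContinuousAlong (A.erase k) (diffDir k j g) :=
  fun z => (hg.avgDir hk (j+1) z).sub (hg.avgDir hk j z)

section MixedHolder

variable {ι : Type*} [DecidableEq ι]

/-- The directions outside `A` are those in which a `Q` has already acted; `0 < x i` keeps the
dyadic cells of `x i` inside `[0, 1]`. -/
def MixedHolderOn (α M : ℝ) (A : Finset ι) (g : (ι → ℝ) → ℝ) : Prop :=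
  ∀ x y : ι → ℝ, (∀ i, x i ∈ Icc (0:ℝ) 1) → (∀ i, y i ∈ Icc (0:ℝ) 1) →
    (∀ i ∉ A, x i ∈ Ioc (0:ℝ) 1) → |mixedDiff A g x y| ≤ M * ∏ i ∈ A, |y i - x i| ^ α

theorem prod_abs_update_sub_rpow {A : Finset ι} {k : ι} (hk : k ∈ A) (x y : ι → ℝ)
    (s t α : ℝ) :
    ∏ i ∈ A, |update y k s i - update x k t i| ^ α =
      |s - t| ^ α * ∏ i ∈ A.erase k, |y i - x i| ^ α := by
  rw [← A.mul_prod_erase _ hk, update_self, update_self]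
  congr 1
  refine Finset.prod_congr rfl fun i hi => ?_
  rw [update_of_ne (A.ne_of_mem_erase hi), update_of_ne (A.ne_of_mem_erase hi)]

theorem MixedHolderOn.abs_sub_mixedDiff_erase_le {α M : ℝ} {A : Finset ι}
    {g : (ι → ℝ) → ℝ} (hg : MixedHolderOn α M A g) {k : ι} (hk : k ∈ A) {x y : ι → ℝ}
    (hx : ∀ i, x i ∈ Icc (0:ℝ) 1) (hy : ∀ i, y i ∈ Icc (0:ℝ) 1)
    (hout : ∀ i ∉ A.erase k, x i ∈ Ioc (0:ℝ) 1) {s t : ℝ} (hs : s ∈ Icc (0:ℝ) 1)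
    (ht : t ∈ Icc (0:ℝ) 1) :
    |mixedDiff (A.erase k) g (update x k s) y - mixedDiff (A.erase k) g (update x k t) y| ≤
      M * (|s - t| ^ α * ∏ i ∈ A.erase k, |y i - x i| ^ α) := by
  rw [← mixedDiff_insert_update (A.notMem_erase k), Finset.insert_erase hk,
    ← prod_abs_update_sub_rpow hk]
  refine hg _ _ ((forall_update_iff x fun _ v => v ∈ Icc (0:ℝ) 1).2 ⟨ht, fun i _ => hx i⟩)
    ((forall_update_iff y fun _ v => v ∈ Icc (0:ℝ) 1).2 ⟨hs, fun i _ => hy i⟩) fun i hi => ?_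
  rw [update_of_ne (ne_of_mem_of_not_mem hk hi).symm]
  exact hout i fun h => hi (Finset.mem_of_mem_erase h)

end MixedHolder

theorem MixedHolderOn.diffDir {α M : ℝ} {A : Finset (Fin d)} {g : (Fin d → ℝ) → ℝ}
    (hα : 0 ≤ α) (hM : 0 ≤ M) (hcont : ContinuousAlong A g) (hg : MixedHolderOn α M A g)
    {k : Fin d} (hk : k ∈ A) (j : ℕ) :
    MixedHolderOn α (M * 2 ^ (-α * j)) (A.erase k) (diffDir k j g) := by
  intro x y hx hy hout
  have hkB : k ∉ A.erase k := A.notMem_erase k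
  have hcell : dyadicCell j (x k) ⊆ Icc 0 1 :=
    (dyadicCell_subset_Ioc (hout k hkB)).trans Ioc_subset_Icc_self
  have hint : ∀ m z, IntegrableOn (fun s => g (update z k s)) (dyadicCell m (x k)) :=
    fun m z => (hcont.continuous_update hk z).integrableOn_Ioc
  change |mixedDiff _ (fun z => avgDir k (j+1) g z - avgDir k j g z) x y| ≤ _
  rw [mixedDiff_sub, mixedDiff_avgDir hkB _ (hint _), mixedDiff_avgDir hkB _ (hint _)]
  refine abs_setAverage_sub_setAverage_le (dyadicCell_succ_subset j _) measurableSet_Ioc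
    measurableSet_Ioc (by rw [volume_dyadicCell]; positivity)
    (by rw [volume_dyadicCell]; exact ENNReal.ofReal_ne_top)
    (hcont.continuous_mixedDiff_update hk hkB x y).integrableOn_Ioc fun s hs t ht => ?_
  have hs' := dyadicCell_succ_subset j _ hs
  have hst : |s - t| ^ α ≤ 2 ^ (-α * j) :=
    calc |s - t| ^ α ≤ ((2:ℝ)^j)⁻¹ ^ α :=
          Real.rpow_le_rpow (abs_nonneg _) (abs_sub_le_of_mem_dyadicCell hs' ht) hα
      _ = 2 ^ (-α * j) := by
          rw [← Real.rpow_natCast, ← Real.rpow_neg zero_le_two, ← Real.rpow_mul zero_le_two,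
            neg_mul_comm, mul_comm]
  calc _ ≤ M * (|s - t| ^ α * ∏ i ∈ A.erase k, |y i - x i| ^ α) :=
        hg.abs_sub_mixedDiff_erase_le hk hx hy hout (hcell hs') (hcell ht)
    _ ≤ M * (2 ^ (-α * j) * ∏ i ∈ A.erase k, |y i - x i| ^ α) := by gcongr
    _ = _ := by ring

noncomputable def iterDiff (j : Fin d → ℕ) (l : List (Fin d)) :
    ((Fin d → ℝ) → ℝ) → (Fin d → ℝ) → ℝ :=
  (l.map fun i => diffDir i (j i)).foldr (fun T g => T ∘ g) id

theorem MixedHolderOn.iterDiff {α M : ℝ} {A : Finset (Fin d)} {g : (Fin d → ℝ) → ℝ}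
    (hα : 0 ≤ α) (hM : 0 ≤ M) (hcont : ContinuousAlong A g) (hg : MixedHolderOn α M A g)
    (j : Fin d → ℕ) {l : List (Fin d)} (hl : l.Nodup) (hlA : ∀ i ∈ l, i ∈ A) :
    ContinuousAlong (A \ l.toFinset) (iterDiff j l g) ∧
      MixedHolderOn α (M * ∏ i ∈ l.toFinset, 2 ^ (-α * j i)) (A \ l.toFinset)
        (iterDiff j l g) := by
  induction l with
  | nil => simpa [_root_.iterDiff] using ⟨hcont, hg⟩
  | cons i l ih =>
    obtain ⟨hil, hl⟩ := List.nodup_cons.mp hl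
    obtain ⟨hcont', hg'⟩ := ih hl fun i' hi' => hlA i' (List.mem_cons_of_mem _ hi')
    have hi : i ∈ A \ l.toFinset :=
      Finset.mem_sdiff.mpr ⟨hlA i List.mem_cons_self, List.mem_toFinset.not.mpr hil⟩
    have hM' : 0 ≤ M * ∏ i ∈ l.toFinset, (2:ℝ) ^ (-α * j i) := by positivity
    rw [List.toFinset_cons, Finset.sdiff_insert,
      Finset.prod_insert (List.mem_toFinset.not.mpr hil), mul_left_comm, mul_comm (2 ^ _)]
    exact ⟨hcont'.diffDir hi (j i), hg'.diffDir hα hM' hcont' hi (j i)⟩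

theorem iterated_diff_bound_of_mixed_holder_general (α C : ℝ)
    (hα : 0 < α) (hC : 0 < C)
    (f : (Fin d → ℝ) → ℝ) (hcont : Continuous f)
    (hf : ∀ x y : Fin d → ℝ, (∀ i, x i ∈ Set.Icc (0:ℝ) 1) →
      (∀ i, y i ∈ Set.Icc (0:ℝ) 1) →
      |∑ S : Finset (Fin d), (-1:ℝ)^(d - S.card) *
          f (fun i => if i ∈ S then y i else x i)|
        ≤ C * ∏ i, |y i - x i| ^ α) :
    ∃ C' > 0, ∀ j : Fin d → ℕ, ∀ x : Fin d → ℝ, (∀ i, x i ∈ Set.Ioc (0:ℝ) 1) →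
      |((List.ofFn (fun i : Fin d => diffDir i (j i))).foldr
          (fun T g => T ∘ g) id f) x|
        ≤ C' * (2:ℝ) ^ (-α * ((∑ i, j i : ℕ) : ℝ)) := by
  refine ⟨C, hC, fun j x hx => ?_⟩
  have hfcont : ContinuousAlong Finset.univ f := fun z => by
    simpa only [Finset.piecewise_univ] using hcont
  have hfholder : MixedHolderOn α C Finset.univ f := fun x y hx hy _ => by
    rw [mixedDiff_univ, Fintype.card_fin]
    exact hf x y hx hy
  obtain ⟨-, hQ⟩ := hfholder.iterDiff hα.le hC.le hfcont j (List.nodup_finRange d)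
    fun i _ => Finset.mem_univ i
  rw [List.toFinset_finRange, Finset.sdiff_self] at hQ
  have hxI : ∀ i, x i ∈ Icc (0:ℝ) 1 := fun i => Ioc_subset_Icc_self (hx i)
  have hbound := hQ x x hxI hxI fun i _ => hx i
  rw [mixedDiff_empty, Finset.prod_empty, mul_one, ← Real.rpow_sum_of_pos two_pos,
    ← Finset.mul_sum] at hbound
  rw [List.ofFn_eq_map]
  exact_mod_cast hbound

/-- A mixed `α`-Hölder function on `[0,1]^d` has iterated martingale
differences `Q^{j_d}⋯Q^{j_1} f` bounded by `C' 2^{-(j_1+⋯+j_d)α}`. -/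
theorem iterated_diff_bound_of_mixed_holder (α C : ℝ)
    (hα : 0 < α) (hα' : α < 1/2) (hC : 0 < C)
    (f : (Fin d → ℝ) → ℝ) (hcont : Continuous f)
    (hf : ∀ x y : Fin d → ℝ, (∀ i, x i ∈ Set.Icc (0:ℝ) 1) →
      (∀ i, y i ∈ Set.Icc (0:ℝ) 1) →
      |∑ S : Finset (Fin d), (-1:ℝ)^(d - S.card) *
          f (fun i => if i ∈ S then y i else x i)|
        ≤ C * ∏ i, |y i - x i| ^ α) :
    ∃ C' > 0, ∀ j : Fin d → ℕ, ∀ x : Fin d → ℝ, (∀ i, x i ∈ Set.Ioc (0:ℝ) 1) →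
      |((List.ofFn (fun i : Fin d => diffDir i (j i))).foldr
          (fun T g => T ∘ g) id f) x|
        ≤ C' * (2:ℝ) ^ (-α * ((∑ i, j i : ℕ) : ℝ)) :=
  iterated_diff_bound_of_mixed_holder_general α C hα hC f hcont hf
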